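/- arXiv:0710.2608 — 3 statements merged into one kernel-verified Lean document; each statement's English description precedes it below -/
import Mathlib

section
/- Let μ be a probability measure on ℝ, λ : ℝ → ℝ a measurable function, and t a real constant. Define F(y₁,y₂) = ∫ [e^{(y₁+y₂)λ(u)}/(1+e^{λ(u)})] · [e^{y₂ t}/(1+e^{λ(u)+t})] dμ(u) for y₁,y₂ ∈ {0,1}, and assume F(0,1)+F(1,0) > 0 and the integrals are finite. Then F(0,1)/(F(0,1)+F(1,0)) = e^t/(1+e^t). In particular this ratio does not depend on λ or μ. -/
open MeasureTheory Real

theorem conditional_logistic_identity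
    (μ : Measure ℝ) [IsProbabilityMeasure μ]
    (lam : ℝ → ℝ) (hlam : Measurable lam) (t : ℝ)
    (F : ℝ → ℝ → ℝ)
    (hF : ∀ y₁ y₂ : ℝ, F y₁ y₂ =
      ∫ u, (exp ((y₁ + y₂) * lam u) / (1 + exp (lam u))) *
        (exp (y₂ * t) / (1 + exp (lam u + t))) ∂μ)
    (hint : ∀ y₁ y₂ : ℝ, Integrable (fun u =>
      (exp ((y₁ + y₂) * lam u) / (1 + exp (lam u))) *
        (exp (y₂ * t) / (1 + exp (lam u + t)))) μ)
    (hpos : 0 < F 0 1 + F 1 0) :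
    F 0 1 / (F 0 1 + F 1 0) = exp t / (1 + exp t) := by
  have key : F 0 1 = exp t * F 1 0 := by
    rw [hF 0 1, hF 1 0, ← integral_const_mul]
    congr 1
    funext u
    simp only [div_eq_mul_inv, zero_mul, exp_zero]
    ring
  have hFpos : 0 < F 1 0 := by
    by_contra h
    push_neg at h
    have : F 0 1 + F 1 0 ≤ 0 := by
      nlinarith [exp_pos t, key]
    linarith
  rw [key]
  field_simp
  ring
end

section
/- Under the same setting, log(F(0,1)/F(1,0)) = t, i.e., the log odds ratio of discordant response configurations equals the treatment effect parameter t, regardless of the mixing measure μ and baseline function λ. -/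
open MeasureTheory Real

theorem conditional_log_odds_ratio
    (μ : Measure ℝ) [IsProbabilityMeasure μ]
    (lam : ℝ → ℝ) (hlam : Measurable lam) (t : ℝ)
    (F : ℝ → ℝ → ℝ)
    (hF : ∀ y₁ y₂ : ℝ, F y₁ y₂ =
      ∫ u, (exp ((y₁ + y₂) * lam u) / (1 + exp (lam u))) *
        (exp (y₂ * t) / (1 + exp (lam u + t))) ∂μ)
    (hint : ∀ y₁ y₂ : ℝ, Integrable (fun u =>
      (exp ((y₁ + y₂) * lam u) / (1 + exp (lam u))) *
        (exp (y₂ * t) / (1 + exp (lam u + t)))) μ)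
    (hpos : 0 < F 1 0) :
    Real.log (F 0 1 / F 1 0) = t := by
  have h : F 0 1 = exp t * F 1 0 := by
    rw [hF, hF, ← integral_const_mul]
    congr 1
    funext u
    simp only [zero_add, add_zero, zero_mul, one_mul, exp_zero]
    ring
  rw [h, mul_div_assoc, div_self (ne_of_gt hpos), mul_one, log_exp]
end

section
/- Let μ be a probability measure on ℝ and let λ, r₁, r₂ : ℝ → (0,∞) be measurable with r₁, r₂ bounded (representing response probabilities), and t ∈ ℝ. Define F*(y₁,y₂) = ∫ [e^{(y₁+y₂)λ(u)}/(1+e^{λ(u)})] · r₁(u) · [e^{y₂t}/(1+e^{λ(u)+t})] · r₂(u) dμ(u), assuming finiteness and F*(0,1)+F*(1,0) > 0. Then F*(0,1)/(F*(0,1)+F*(1,0)) = e^t/(1+e^t). -/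
open MeasureTheory Real

theorem conditional_logistic_identity_missing
    (μ : Measure ℝ) [IsProbabilityMeasure μ]
    (lam r₁ r₂ : ℝ → ℝ)
    (hlam : Measurable lam) (hr₁ : Measurable r₁) (hr₂ : Measurable r₂)
    (hr₁pos : ∀ u, 0 < r₁ u) (hr₂pos : ∀ u, 0 < r₂ u)
    (hr₁bdd : ∃ C : ℝ, ∀ u, r₁ u ≤ C) (hr₂bdd : ∃ C : ℝ, ∀ u, r₂ u ≤ C)
    (t : ℝ)
    (F : ℝ → ℝ → ℝ)
    (hF : ∀ y₁ y₂ : ℝ, F y₁ y₂ =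
      ∫ u, (exp ((y₁ + y₂) * lam u) / (1 + exp (lam u))) * r₁ u *
        (exp (y₂ * t) / (1 + exp (lam u + t))) * r₂ u ∂μ)
    (hint : ∀ y₁ y₂ : ℝ, Integrable (fun u =>
      (exp ((y₁ + y₂) * lam u) / (1 + exp (lam u))) * r₁ u *
        (exp (y₂ * t) / (1 + exp (lam u + t))) * r₂ u) μ)
    (hpos : 0 < F 0 1 + F 1 0) :
    F 0 1 / (F 0 1 + F 1 0) = exp t / (1 + exp t) := by
  have key : F 0 1 = exp t * F 1 0 := by
    rw [hF 0 1, hF 1 0, ← integral_const_mul]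
    congr 1
    funext u
    simp [Real.exp_zero]
    ring
  have h10 : 0 < F 1 0 := by
    by_contra h
    push_neg at h
    have : F 0 1 + F 1 0 ≤ 0 := by
      rw [key]
      nlinarith [exp_pos t]
    linarith
  rw [key]
  have h1t : 0 < 1 + exp t := by positivity
  field_simp
  ring
end
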